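/- Let A be a uniform algebra on X = [0,1]. Suppose that A is 2-local on [0,1] and that [0,1] has a dense subset S such that every x ∈ S is a peak point for A at which A is strongly regular. Then A = C([0,1]). -/

import Mathlib

/-!
Cutting a function `g ∈ A` at a point `s` (replacing it by `g - g s` on `[s, 1]` and by `0`
before `s`) stays in `A` when `s ∈ S`: for `g` vanishing near `s` this is 2-locality, and strong
regularity together with closedness of `A` extend it to every `g` with `g s = 0`. Cutting a high
power `p ^ n` of a peak function at `s` and subtracting the cut gives an element of `A` of modulus
at most `1` that equals `1` on `[s, 1]` and is uniformly small to the left of any `a < s`.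
Telescoping sums of such steps, placed at points of `S` in a fine partition of `[0, 1]`,
approximate every continuous function uniformly.
-/

open Topology Filter Set
open scoped unitInterval

section Notions

variable {X : Type*} [TopologicalSpace X]

def IsTwoLocal (A : Subalgebra ℂ C(X, ℂ)) : Prop :=
  ∀ f : C(X, ℂ), ∀ g₁ ∈ A, ∀ g₂ ∈ A,
    (∀ x : X, ∃ U ∈ 𝓝 x, (∀ y ∈ U, f y = g₁ y) ∨ (∀ y ∈ U, f y = g₂ y)) → f ∈ A

def IsStronglyRegularAt (A : Subalgebra ℂ C(X, ℂ)) (x : X) : Prop :=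
  {f : C(X, ℂ) | f ∈ A ∧ f x = 0} ⊆ closure {f : C(X, ℂ) | f ∈ A ∧ ∃ U ∈ 𝓝 x, ∀ y ∈ U, f y = 0}

def IsPeakPoint (A : Subalgebra ℂ C(X, ℂ)) (x : X) : Prop :=
  ∃ f ∈ A, f x = 1 ∧ ∀ t : X, t ≠ x → ‖f t‖ < 1

end Notions

section RightCut

variable {X : Type*} [TopologicalSpace X] [LinearOrder X] [OrderClosedTopology X]

noncomputable def rightCut (s : X) (g : C(X, ℂ)) : C(X, ℂ) where
  toFun x := if s ≤ x then g x - g s else 0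
  continuous_toFun := by
    refine Continuous.if_le (by fun_prop) continuous_const continuous_const continuous_id ?_
    rintro x rfl
    exact sub_self _

lemma rightCut_apply_of_le {s x : X} (g : C(X, ℂ)) (h : s ≤ x) : rightCut s g x = g x - g s :=
  if_pos h

lemma rightCut_apply_of_lt {s x : X} (g : C(X, ℂ)) (h : x < s) : rightCut s g x = 0 :=
  if_neg h.not_ge

lemma rightCut_sub_const (s : X) (g : C(X, ℂ)) (c : ℂ) :
    rightCut s (g - algebraMap ℂ C(X, ℂ) c) = rightCut s g := by
  ext x
  rcases le_or_gt s x with h | h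
  · simp [rightCut_apply_of_le _ h, Algebra.algebraMap_eq_smul_one]
  · simp [rightCut_apply_of_lt _ h]

lemma IsTwoLocal.rightCut_mem {A : Subalgebra ℂ C(X, ℂ)} (hA : IsTwoLocal A) {s : X}
    {g : C(X, ℂ)} (hg : g ∈ A) (hU : ∃ U ∈ 𝓝 s, ∀ y ∈ U, g y = 0) : rightCut s g ∈ A := by
  obtain ⟨U, hUs, hgU⟩ := hU
  have hgs : g s = 0 := hgU s (mem_of_mem_nhds hUs)
  refine hA _ g hg 0 A.zero_mem fun x ↦ ?_
  rcases lt_trichotomy x s with h | rfl | h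
  · exact ⟨Iio s, isOpen_Iio.mem_nhds h, Or.inr fun y hy ↦ rightCut_apply_of_lt g hy⟩
  · refine ⟨U, hUs, Or.inl fun y hy ↦ ?_⟩
    rcases le_or_gt x y with hxy | hxy
    · rw [rightCut_apply_of_le g hxy, hgs, sub_zero]
    · rw [rightCut_apply_of_lt g hxy, hgU y hy]
  · exact ⟨Ioi s, isOpen_Ioi.mem_nhds h, Or.inl fun y hy ↦ by
      rw [rightCut_apply_of_le g (le_of_lt hy), hgs, sub_zero]⟩

variable [CompactSpace X]

lemma lipschitzWith_rightCut (s : X) : LipschitzWith 2 (rightCut s) := by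
  refine LipschitzWith.of_dist_le_mul fun f g ↦ ?_
  rw [ContinuousMap.dist_le (by positivity)]
  intro x
  rcases le_or_gt s x with h | h
  · rw [rightCut_apply_of_le f h, rightCut_apply_of_le g h]
    calc dist (f x - f s) (g x - g s) ≤ dist (f x) (g x) + dist (f s) (g s) :=
          dist_sub_sub_le _ _ _ _
      _ ≤ dist f g + dist f g :=
          add_le_add (ContinuousMap.dist_apply_le_dist x) (ContinuousMap.dist_apply_le_dist s)
      _ = (2 : NNReal) * dist f g := by push_cast; ring
  · rw [rightCut_apply_of_lt f h, rightCut_apply_of_lt g h, dist_self]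
    positivity

lemma rightCut_mem {A : Subalgebra ℂ C(X, ℂ)} (hA : IsClosed (A : Set C(X, ℂ)))
    (h2 : IsTwoLocal A) {s : X} (hs : IsStronglyRegularAt A s) {g : C(X, ℂ)} (hg : g ∈ A) :
    rightCut s g ∈ A := by
  have hclosed : IsClosed (rightCut s ⁻¹' A) :=
    hA.preimage (lipschitzWith_rightCut s).continuous
  have hJ : {f : C(X, ℂ) | f ∈ A ∧ ∃ U ∈ 𝓝 s, ∀ y ∈ U, f y = 0} ⊆ rightCut s ⁻¹' A :=
    fun f hf ↦ h2.rightCut_mem hf.1 hf.2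
  rw [← rightCut_sub_const s g (g s)]
  refine hclosed.closure_subset_iff.mpr hJ (hs ⟨A.sub_mem hg (A.algebraMap_mem _), ?_⟩)
  simp [Algebra.algebraMap_eq_smul_one]

structure IsStep (E : C(X, ℂ)) (a s : X) (ε : ℝ) : Prop where
  norm_le_one : ∀ x, ‖E x‖ ≤ 1
  eq_one : ∀ x, s ≤ x → E x = 1
  norm_le : ∀ x, x ≤ a → ‖E x‖ ≤ ε

lemma IsPeakPoint.exists_isStep_mem {A : Subalgebra ℂ C(X, ℂ)} {s : X} (hs : IsPeakPoint A s)
    (hcut : ∀ g ∈ A, rightCut s g ∈ A) {a : X} (has : a < s) {ε : ℝ} (hε : 0 < ε) :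
    ∃ E ∈ A, IsStep E a s ε := by
  obtain ⟨p, hpA, hps, hplt⟩ := hs
  have hple : ∀ x, ‖p x‖ ≤ 1 := fun x ↦ by
    rcases eq_or_ne x s with rfl | h
    · simp [hps]
    · exact (hplt x h).le
  obtain ⟨x₀, hx₀a, hx₀max⟩ := isClosed_Iic.isCompact.exists_isMaxOn nonempty_Iic
    (continuous_norm.comp p.continuous).continuousOn
  obtain ⟨n, hn⟩ := exists_pow_lt_of_lt_one hε (hplt x₀ (hx₀a.trans_lt has).ne)
  have hq : ∀ x, (p ^ n) x = p x ^ n := fun x ↦ by simp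
  refine ⟨p ^ n - rightCut s (p ^ n), A.sub_mem (pow_mem hpA n) (hcut _ (pow_mem hpA n)),
    ⟨fun x ↦ ?_, fun x hx ↦ ?_, fun x hx ↦ ?_⟩⟩
  · rcases le_or_gt s x with h | h
    · simp [rightCut_apply_of_le _ h, hq, hps]
    · simpa [rightCut_apply_of_lt _ h, hq] using pow_le_one₀ (norm_nonneg _) (hple x)
  · simp [rightCut_apply_of_le _ hx, hq, hps]
  · rw [ContinuousMap.sub_apply, rightCut_apply_of_lt _ (hx.trans_lt has), sub_zero, hq,
      norm_pow]
    exact (pow_le_pow_left₀ (norm_nonneg _) (hx₀max hx) n).trans hn.le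

end RightCut

lemma unitInterval.induction_of_dist_le {P : I → Prop} {δ : ℝ} (hδ : 0 < δ) (h0 : P 0)
    (hstep : ∀ c c' : I, c < c' → dist c c' ≤ δ → P c → P c') : P 1 := by
  let t : ℕ → I := fun n ↦ projIcc 0 1 zero_le_one (n * δ)
  have ht : ∀ n, P (t n) := by
    intro n
    induction n with
    | zero => simpa [t, projIcc_left] using h0
    | succ n ih =>
      have hmono : t n ≤ t (n + 1) := monotone_projIcc _ (by gcongr; simp)
      rcases hmono.lt_or_eq with h | h
      · refine hstep _ _ h ?_ ih
        calc dist (t n) (t (n + 1)) ≤ 1 * dist ((n : ℝ) * δ) ((n + 1 : ℕ) * δ) :=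
              (LipschitzWith.projIcc zero_le_one).dist_le_mul _ _
          _ = δ := by
            rw [one_mul, Real.dist_eq, abs_sub_comm, abs_of_nonneg (by push_cast; nlinarith)]
            push_cast
            ring
      · rwa [← h]
  obtain ⟨n, hn⟩ := exists_nat_ge δ⁻¹
  have h1 : t n = 1 := projIcc_of_right_le _ ((inv_le_iff_one_le_mul₀ hδ).mp hn)
  exact h1 ▸ ht n

section Approximation

variable {A : Subalgebra ℂ C(I, ℂ)}

lemma exists_mem_extend_approx {f G E : C(I, ℂ)} (hGA : G ∈ A) (hEA : E ∈ A) {ε : ℝ}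
    {c c' s : I} (hcc' : c ≤ c') (hsc' : s ≤ c') (hE : IsStep E c s (c' - c))
    (hf : ∀ x, c ≤ x → x ≤ c' → ‖f c - f x‖ ≤ ε)
    (hG : ∀ x, c ≤ x → G x = f c) (hGf : ∀ x ≤ c, ‖G x - f x‖ ≤ (2 + c) * ε) :
    ∃ G' ∈ A, (∀ x, c' ≤ x → G' x = f c') ∧ ∀ x ≤ c', ‖G' x - f x‖ ≤ (2 + c') * ε := by
  set Δ := f c' - f c
  have hε : 0 ≤ ε := by simpa using hf c le_rfl hcc'
  have hΔ : ‖Δ‖ ≤ ε := by rw [norm_sub_rev]; exact hf c' hcc' le_rfl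
  have happly : ∀ x, (G + algebraMap ℂ C(I, ℂ) Δ * E) x = G x + Δ * E x := fun x ↦ by
    simp [Algebra.algebraMap_eq_smul_one]
  refine ⟨G + algebraMap ℂ C(I, ℂ) Δ * E, A.add_mem hGA (A.mul_mem (A.algebraMap_mem Δ) hEA),
    fun x hx ↦ ?_, fun x hx ↦ ?_⟩
  · rw [happly, hG x (hcc'.trans hx), hE.eq_one x (hsc'.trans hx)]
    ring
  rw [happly]
  rcases le_total x c with hxc | hcx
  · calc ‖G x + Δ * E x - f x‖ = ‖(G x - f x) + Δ * E x‖ := by ring_nf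
      _ ≤ ‖G x - f x‖ + ‖Δ‖ * ‖E x‖ := (norm_add_le _ _).trans_eq (by rw [norm_mul])
      _ ≤ (2 + c) * ε + ε * (c' - c) :=
          add_le_add (hGf x hxc) (mul_le_mul hΔ (hE.norm_le x hxc) (norm_nonneg _) hε)
      _ = (2 + c') * ε := by ring
  · calc ‖G x + Δ * E x - f x‖ = ‖(f c - f x) + Δ * E x‖ := by rw [hG x hcx]; ring_nf
      _ ≤ ‖f c - f x‖ + ‖Δ‖ * ‖E x‖ := (norm_add_le _ _).trans_eq (by rw [norm_mul])
      _ ≤ ε + ε * 1 :=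
          add_le_add (hf x hcx hx) (mul_le_mul hΔ (hE.norm_le_one x) (norm_nonneg _) hε)
      _ ≤ (2 + c') * ε := by nlinarith [c'.2.1]

variable {S : Set I}

lemma exists_mem_forall_norm_sub_le (hS : Dense S)
    (hstep : ∀ s ∈ S, ∀ a < s, ∀ ε > 0, ∃ E ∈ A, IsStep E a s ε)
    (f : C(I, ℂ)) {ε : ℝ} (hε : 0 < ε) : ∃ G ∈ A, ∀ x, ‖G x - f x‖ ≤ 3 * ε := by
  obtain ⟨δ, hδ, hfδ⟩ := Metric.uniformContinuous_iff.mp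
    (CompactSpace.uniformContinuous_of_continuous f.continuous) ε hε
  -- moving from `c` to `c'` adds at most `ε * (c' - c)` to the error on `[0, c]`, hence `2 + c`
  have hP1 := unitInterval.induction_of_dist_le (P := fun c ↦ ∃ G ∈ A,
    (∀ x, c ≤ x → G x = f c) ∧ ∀ x ≤ c, ‖G x - f x‖ ≤ (2 + c) * ε) (half_pos hδ) ?_ ?_
  · obtain ⟨G, hGA, -, hG⟩ := hP1
    exact ⟨G, hGA, fun x ↦ (hG x (unitInterval.le_one x)).trans_eq (by norm_num)⟩
  · refine ⟨algebraMap ℂ C(I, ℂ) (f 0), A.algebraMap_mem _, fun x _ ↦ by simp, fun x hx ↦ ?_⟩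
    obtain rfl : x = 0 := le_antisymm hx x.2.1
    simp [Algebra.algebraMap_eq_smul_one]
    positivity
  · rintro c c' hcc' hdist ⟨G, hGA, hG, hGf⟩
    obtain ⟨s, hsS, hs⟩ := hS.exists_mem_open isOpen_Ioo (nonempty_Ioo.mpr hcc')
    obtain ⟨E, hEA, hE⟩ := hstep s hsS c hs.1 ((c' : ℝ) - c) (sub_pos.mpr hcc')
    refine exists_mem_extend_approx hGA hEA hcc'.le hs.2.le hE (fun x hcx hxc' ↦ ?_) hG hGf
    have hcx : dist c x < δ :=
      ((Real.dist_left_le_of_mem_uIcc (mem_uIcc_of_le hcx hxc')).trans hdist).trans_lt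
        (half_lt_self hδ)
    rw [← dist_eq_norm]
    exact (hfδ hcx).le

theorem eq_top_of_dense_isStep (hA : IsClosed (A : Set C(I, ℂ))) (hS : Dense S)
    (hstep : ∀ s ∈ S, ∀ a < s, ∀ ε > 0, ∃ E ∈ A, IsStep E a s ε) : A = ⊤ := by
  refine eq_top_iff.2 fun f _ ↦ hA.closure_subset (Metric.mem_closure_iff.2 fun ε hε ↦ ?_)
  obtain ⟨G, hGA, hG⟩ := exists_mem_forall_norm_sub_le hS hstep f (by positivity : 0 < ε / 4)
  have hdist : dist f G ≤ 3 * (ε / 4) := (ContinuousMap.dist_le (by positivity)).2 fun x ↦ by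
    rw [dist_eq_norm, norm_sub_rev]
    exact hG x
  exact ⟨G, hGA, hdist.trans_lt (by linarith)⟩

end Approximation

theorem stmt_8_general (A : Subalgebra ℂ C(unitInterval, ℂ))
    (hA : IsClosed (A : Set C(unitInterval, ℂ)))
    (h2 : ∀ f : C(unitInterval, ℂ), ∀ g₁ ∈ A, ∀ g₂ ∈ A,
      (∀ x : unitInterval, ∃ U ∈ 𝓝 x,
        (∀ y ∈ U, f y = g₁ y) ∨ (∀ y ∈ U, f y = g₂ y)) → f ∈ A)
    (S : Set unitInterval) (hS : Dense S)
    (hpeak : ∀ x ∈ S, ∃ f ∈ A, f x = 1 ∧ ∀ t : unitInterval, t ≠ x → ‖f t‖ < 1)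
    (hsr : ∀ x ∈ S, {f : C(unitInterval, ℂ) | f ∈ A ∧ f x = 0} ⊆
      closure {f : C(unitInterval, ℂ) | f ∈ A ∧ ∃ U ∈ 𝓝 x, ∀ y ∈ U, f y = 0}) :
    A = ⊤ :=
  eq_top_of_dense_isStep hA hS fun s hs _ has _ hε ↦ IsPeakPoint.exists_isStep_mem (hpeak s hs)
    (fun _ hg ↦ rightCut_mem hA h2 (hsr s hs) hg) has hε

/-- Let `A` be a uniform algebra on `[0,1]` which is `2`-local on `[0,1]`, and suppose
`[0,1]` has a dense subset `S` of peak points for `A` at which `A` is strongly regular.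
Then `A = C([0,1])`. -/
theorem stmt_8 (A : Subalgebra ℂ C(unitInterval, ℂ))
    (hA : IsClosed (A : Set C(unitInterval, ℂ)))
    (hsep : ∀ x y : unitInterval, x ≠ y → ∃ f ∈ A, f x ≠ f y)
    (h2 : ∀ f : C(unitInterval, ℂ), ∀ g₁ ∈ A, ∀ g₂ ∈ A,
      (∀ x : unitInterval, ∃ U ∈ 𝓝 x,
        (∀ y ∈ U, f y = g₁ y) ∨ (∀ y ∈ U, f y = g₂ y)) → f ∈ A)
    (S : Set unitInterval) (hS : Dense S)
    (hpeak : ∀ x ∈ S, ∃ f ∈ A, f x = 1 ∧ ∀ t : unitInterval, t ≠ x → ‖f t‖ < 1)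
    (hsr : ∀ x ∈ S, {f : C(unitInterval, ℂ) | f ∈ A ∧ f x = 0} ⊆
      closure {f : C(unitInterval, ℂ) | f ∈ A ∧ ∃ U ∈ 𝓝 x, ∀ y ∈ U, f y = 0}) :
    A = ⊤ :=
  stmt_8_general A hA h2 S hS hpeak hsr
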